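/- If a right S-semimodule M is finitely presented and flat, then M is projective. -/

import Mathlib

universe u

/-- Concrete description of a directed colimit cocone: the cocone maps are
compatible with the system, jointly surjective, and identify two elements only if
they are identified somewhere in the system. -/
def IsDirectedColimit {I : Type u} [Preorder I] {X : I → Type u} {L : Type u}
    (t : ∀ i j, i ≤ j → X i → X j) (c : ∀ i, X i → L) : Prop :=
  (∀ i j (h : i ≤ j) (x : X i), c j (t i j h x) = c i x) ∧
  (∀ y : L, ∃ i x, c i x = y) ∧
  (∀ i (x y : X i), c i x = c i y → ∃ j, ∃ h : i ≤ j, t i j h x = t i j h y)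

/-- A directed system of `S`-semimodules together with a colimit cocone to `L`. -/
structure DirSystem (S : Type u) [Semiring S] (L : Type u) [AddCommMonoid L]
    [Module S L] : Type (u + 1) where
  I : Type u
  [pre : Preorder I]
  directed : IsDirected I (· ≤ ·)
  X : I → Type u
  [addX : ∀ i, AddCommMonoid (X i)]
  [modX : ∀ i, Module S (X i)]
  t : ∀ i j, i ≤ j → X i →ₗ[S] X j
  t_id : ∀ i (x : X i), t i i le_rfl x = x
  t_comp : ∀ i j k (hij : i ≤ j) (hjk : j ≤ k) (x : X i),
    t j k hjk (t i j hij x) = t i k (hij.trans hjk) x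
  c : ∀ i, X i →ₗ[S] L
  colim : IsDirectedColimit (fun i j h => ⇑(t i j h)) fun i => ⇑(c i)

attribute [instance] DirSystem.pre DirSystem.addX DirSystem.modX

/-- `M` is finitely presented iff `Hom_S(M, −)` preserves directed colimits. -/
def FinitelyPresented (S : Type u) [Semiring S] (M : Type u) [AddCommMonoid M]
    [Module S M] : Prop :=
  ∀ (L : Type u) [AddCommMonoid L] [Module S L] (D : DirSystem S L),
    IsDirectedColimit (fun i j h (g : M →ₗ[S] D.X i) => (D.t i j h).comp g)
      (fun i (g : M →ₗ[S] D.X i) => (D.c i).comp g)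

/-- `M` is flat iff `M` is a directed colimit of finitely generated free
`S`-semimodules. -/
def FlatSemimodule (S : Type u) [Semiring S] (M : Type u) [AddCommMonoid M]
    [Module S M] : Prop :=
  ∃ D : DirSystem S M, ∀ i : D.I, ∃ n : ℕ, Nonempty (D.X i ≃ₗ[S] (Fin n → S))

/-! Finite presentation lets `id_M` factor through a stage of a presentation of `M` as a directed
colimit of finite free semimodules, so `M` is a retract of a finite free semimodule. -/

theorem FinitelyPresented.exists_rightInverse_cocone {S : Type u} [Semiring S] {M : Type u}
    [AddCommMonoid M] [Module S M] (hfp : FinitelyPresented S M) (D : DirSystem S M) :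
    ∃ i, ∃ s : M →ₗ[S] D.X i, D.c i ∘ₗ s = LinearMap.id :=
  (hfp M D).2.1 LinearMap.id

theorem FinitelyPresented.projective_of_flatSemimodule {S : Type u} [Semiring S] {M : Type u}
    [AddCommMonoid M] [Module S M] (hfp : FinitelyPresented S M) (hflat : FlatSemimodule S M) :
    Module.Projective S M := by
  obtain ⟨D, hfree⟩ := hflat
  obtain ⟨i, s, hs⟩ := hfp.exists_rightInverse_cocone D
  obtain ⟨n, ⟨e⟩⟩ := hfree i
  have : Module.Free S (D.X i) := .of_equiv e.symm
  exact .of_split s (D.c i) hs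

/-- If a right `S`-semimodule `M` is finitely presented and flat, then `M` is
projective. -/
theorem finitely_presented_flat_implies_projective
    {S : Type u} [Semiring S] {M : Type u} [AddCommMonoid M] [Module S M]
    (hfp : FinitelyPresented S M) (hflat : FlatSemimodule S M) :
    ∀ (Y Z : Type u) [AddCommMonoid Y] [Module S Y] [AddCommMonoid Z]
      [Module S Z] (g : Y →ₗ[S] Z), Function.Surjective g →
      ∀ h : M →ₗ[S] Z, ∃ h' : M →ₗ[S] Y, g.comp h' = h := by
  have := hfp.projective_of_flatSemimodule hflat
  intro Y Z _ _ _ _ g hg h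
  exact Module.projective_lifting_property g h hg
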